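/- arXiv:2504.04049 — 3 statements merged into one kernel-verified Lean document; each statement's English description precedes it below -/
import Mathlib

section
/- Let D = (d_{n,k}) = (g; f_1,…,f_ℓ) and E = (e_{n,k}) = (G; F_1,…,F_ℓ) be multiple Riordan arrays, let h be an ℓ-th root of f_1⋯f_ℓ, and suppose q_i ∈ K[[t]] satisfy f_i = q_i·h for i = 1,…,ℓ. Then g·G(h) = Σ c_k t^{ℓk} with c_0 ≠ 0, each q_i·F_i(h) = Σ c_{i,k} t^{ℓk+1} with c_{i,0} ≠ 0, and for all n, k ≥ 0 the matrix product satisfies Σ_{j=0}^{n} d_{n,j}·e_{j,k} = p_{n,k}, where (p_{n,k}) is the multiple Riordan array ( g·G(h); q_1·F_1(h), …, q_ℓ·F_ℓ(h) ). In particular, the product of two multiple Riordan arrays is a multiple Riordan array. -/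
open PowerSeries Finset

/-- Formal substitution `F(u)`: for `u` with zero constant term, the `n`-th coefficient of
`F(u)` is `∑_{k ≤ n} F_k · [t^n] u^k`. -/
noncomputable def psComp {K : Type*} [CommRing K] (F u : K⟦X⟧) : K⟦X⟧ :=
  PowerSeries.mk fun n => ∑ k ∈ Finset.range (n + 1), coeff k F * coeff n (u ^ k)

/-- Entry `d_{n,k}` of the multiple Riordan array `(g; f_0, …, f_{ℓ-1})`: the `k`-th column,
`k = qℓ + m`, has generating function `g · f_0⋯f_{m-1} · (f_0⋯f_{ℓ-1})^q`. -/
noncomputable def mrEntry {K : Type*} [CommRing K] (ℓ : ℕ) (g : K⟦X⟧) (f : ℕ → K⟦X⟧)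
    (n k : ℕ) : K :=
  coeff n (g * (∏ i ∈ Finset.range (k % ℓ), f i) * (∏ i ∈ Finset.range ℓ, f i) ^ (k / ℓ))

/-!
Write `f_i = q_i h` and `Q_m = q_0 ⋯ q_{m-1}`. Since `h^ℓ = f_0 ⋯ f_{ℓ-1}`, the `j`-th column of
`D` is `g Q_{j mod ℓ} h^j`, and `Q_ℓ = 1`. A column `E_k` of `E` only has exponents
`≡ k (mod ℓ)`, so in `∑_j d_{n,j} e_{j,k}` only `j ≡ k` contributes and the sum is the `n`-th
coefficient of `g Q_{k mod ℓ} E_k(h)`. As substitution of `h` is a ring homomorphism, this is the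
`k`-th column of `(g G(h); q_0 F_0(h), …, q_{ℓ-1} F_{ℓ-1}(h))`. The support conditions on the new
generators follow from those of `g, G, F_i, h` once one knows that `q_i = f_i / h` only has
exponents divisible by `ℓ`.
-/

section Substitution

variable {R : Type*} [CommRing R] {u : R⟦X⟧}

lemma coeff_pow_eq_zero_of_lt (hu : constantCoeff u = 0) {n k : ℕ} (hnk : n < k) :
    coeff n (u ^ k) = 0 :=
  coeff_of_lt_order n <| (Nat.cast_lt.mpr hnk).trans_le
    (le_order_pow_of_constantCoeff_eq_zero k hu)

lemma coeff_psComp_of_le (hu : constantCoeff u = 0) (F : R⟦X⟧) {m n : ℕ} (hmn : m ≤ n) :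
    coeff m (psComp F u) = ∑ k ∈ range (n + 1), coeff k F * coeff m (u ^ k) := by
  rw [psComp, coeff_mk]
  refine sum_subset (range_subset_range.mpr (by omega)) fun k _ hk => ?_
  rw [coeff_pow_eq_zero_of_lt hu (by simpa using hk), mul_zero]

lemma psComp_eq_subst (hu : constantCoeff u = 0) (F : R⟦X⟧) : psComp F u = F.subst u := by
  ext n
  rw [coeff_subst' (HasSubst.of_constantCoeff_zero' hu), finsum_eq_sum_of_support_subset
    (s := range (n + 1)), coeff_psComp_of_le hu F le_rfl]
  · rfl
  · intro k hk
    by_contra hkn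
    exact hk (by simp only [coeff_pow_eq_zero_of_lt hu (by simpa using hkn), smul_zero])

lemma constantCoeff_psComp (F u : R⟦X⟧) : constantCoeff (psComp F u) = constantCoeff F := by
  rw [← coeff_zero_eq_constantCoeff_apply, psComp, coeff_mk]
  simp

lemma coeff_one_psComp (F u : R⟦X⟧) : coeff 1 (psComp F u) = coeff 1 F * coeff 1 u := by
  simp [psComp, sum_range_succ, coeff_one]

lemma coeff_mul_psComp (hu : constantCoeff u = 0) (C E : R⟦X⟧) (n : ℕ) :
    coeff n (C * psComp E u) = ∑ j ∈ range (n + 1), coeff j E * coeff n (C * u ^ j) := by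
  calc coeff n (C * psComp E u)
      = ∑ p ∈ antidiagonal n, ∑ j ∈ range (n + 1),
          coeff j E * (coeff p.1 C * coeff p.2 (u ^ j)) := by
        rw [coeff_mul]
        refine sum_congr rfl fun p hp => ?_
        rw [coeff_psComp_of_le hu E (HasAntidiagonal.antidiagonal.snd_le hp), mul_sum]
        exact sum_congr rfl fun j _ => by ring
    _ = _ := by
        rw [sum_comm]
        simp_rw [← mul_sum, coeff_mul]

end Substitution

def IsSupportedMod {R : Type*} [Semiring R] (ℓ : ℕ) (r : ZMod ℓ) (A : R⟦X⟧) : Prop :=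
  ∀ n : ℕ, (n : ZMod ℓ) ≠ r → coeff n A = 0

lemma isSupportedMod_zero_iff {R : Type*} [Semiring R] {ℓ : ℕ} {A : R⟦X⟧} :
    IsSupportedMod ℓ 0 A ↔ ∀ n, ¬ ℓ ∣ n → coeff n A = 0 := by
  simp only [IsSupportedMod, ne_eq, ZMod.natCast_eq_zero_iff]

lemma isSupportedMod_one_iff {R : Type*} [Semiring R] {ℓ : ℕ} (hℓ : ℓ ≠ 1) {A : R⟦X⟧} :
    IsSupportedMod ℓ 1 A ↔ ∀ n, n % ℓ ≠ 1 → coeff n A = 0 := by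
  rw [← Nat.cast_one (R := ZMod ℓ)]
  simp only [IsSupportedMod, ne_eq, ZMod.natCast_eq_natCast_iff', Nat.one_mod_eq_one.mpr hℓ]

namespace IsSupportedMod

section CommSemiring

variable {R : Type*} [CommSemiring R] {ℓ : ℕ} {r s : ZMod ℓ} {A B : R⟦X⟧}

lemma one : IsSupportedMod ℓ 0 (1 : R⟦X⟧) := by
  intro n hn
  rw [coeff_one, if_neg (by rintro rfl; exact hn Nat.cast_zero)]

lemma mul (hA : IsSupportedMod ℓ r A) (hB : IsSupportedMod ℓ s B) :
    IsSupportedMod ℓ (r + s) (A * B) := by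
  intro n hn
  rw [coeff_mul]
  refine sum_eq_zero fun p hp => ?_
  by_cases h1 : (p.1 : ZMod ℓ) = r
  · have h2 : (p.2 : ZMod ℓ) ≠ s := by
      rintro h2
      exact hn (by rw [← mem_antidiagonal.mp hp, Nat.cast_add, h1, h2])
    rw [hB _ h2, mul_zero]
  · rw [hA _ h1, zero_mul]

lemma pow (hA : IsSupportedMod ℓ r A) (k : ℕ) : IsSupportedMod ℓ (k • r) (A ^ k) := by
  induction k with
  | zero => simpa using one
  | succ k ih => rw [pow_succ, succ_nsmul]; exact ih.mul hA

lemma prod {ι : Type*} {t : Finset ι} {r : ι → ZMod ℓ} {A : ι → R⟦X⟧}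
    (hA : ∀ i ∈ t, IsSupportedMod ℓ (r i) (A i)) :
    IsSupportedMod ℓ (∑ i ∈ t, r i) (∏ i ∈ t, A i) := by
  induction t using Finset.cons_induction with
  | empty => simpa using one
  | cons a t ha ih =>
    rw [prod_cons, sum_cons]
    exact (hA a (mem_cons_self a t)).mul (ih fun i hi => hA i (mem_cons_of_mem hi))

lemma of_mul_right [NoZeroDivisors R] (hAB : IsSupportedMod ℓ (r + s) (A * B))
    (hB : IsSupportedMod ℓ s B) (hB0 : B ≠ 0) : IsSupportedMod ℓ r A := by
  classical
  have hex : ∃ b, coeff b B ≠ 0 := exists_coeff_ne_zero_iff_ne_zero.mpr hB0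
  set b := Nat.find hex
  have hb : coeff b B ≠ 0 := Nat.find_spec hex
  have hbs : (b : ZMod ℓ) = s := by_contra fun h => hb (hB b h)
  intro n
  induction n using Nat.strong_induction_on with
  | _ n ih =>
  intro hn
  -- by minimality of `b` and induction, `coeff n A * coeff b B` is the only term left
  have hsum : coeff (n + b) (A * B) = coeff n A * coeff b B := by
    rw [coeff_mul]
    refine sum_eq_single_of_mem (n, b) (mem_antidiagonal.mpr rfl) fun p hp hpnb => ?_
    have hp' := mem_antidiagonal.mp hp
    rcases lt_or_ge p.2 b with hp2 | hp2
    · rw [not_not.mp (Nat.find_min hex hp2), mul_zero]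
    by_cases hp1 : (p.1 : ZMod ℓ) = r
    · have : (p.2 : ZMod ℓ) ≠ s := fun h2 => hn <| add_right_cancel (b := s) <| by
        rw [← hbs, ← Nat.cast_add, ← hp', Nat.cast_add, hp1, h2, hbs]
      rw [hB _ this, mul_zero]
    · have hp1n : p.1 ≠ n := fun h => hpnb (Prod.ext h (by omega))
      rw [ih p.1 (by omega) hp1, zero_mul]
  have : coeff (n + b) (A * B) = 0 :=
    hAB _ (by rw [Nat.cast_add, hbs]; exact fun h => hn (add_right_cancel h))
  exact (mul_eq_zero.mp (hsum ▸ this)).resolve_right hb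

end CommSemiring

lemma psComp {R : Type*} [CommRing R] {ℓ : ℕ} {r : ZMod ℓ} {A u : R⟦X⟧}
    (hA : IsSupportedMod ℓ r A) (hu : IsSupportedMod ℓ 1 u) :
    IsSupportedMod ℓ r (psComp A u) := by
  intro n hn
  rw [_root_.psComp, coeff_mk]
  refine sum_eq_zero fun k _ => ?_
  by_cases hk : (k : ZMod ℓ) = r
  · rw [hu.pow k n (by rwa [nsmul_one, hk]), mul_zero]
  · rw [hA k hk, zero_mul]

end IsSupportedMod

section MultipleRiordan

variable {R : Type*} [CommSemiring R] {ℓ : ℕ}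

def mrColumn (ℓ : ℕ) (g : R) (f : ℕ → R) (k : ℕ) : R :=
  g * (∏ i ∈ range (k % ℓ), f i) * (∏ i ∈ range ℓ, f i) ^ (k / ℓ)

lemma isSupportedMod_mrColumn (hℓ : 0 < ℓ) {g : R⟦X⟧} {f : ℕ → R⟦X⟧}
    (hg : IsSupportedMod ℓ 0 g) (hf : ∀ i < ℓ, IsSupportedMod ℓ 1 (f i)) (k : ℕ) :
    IsSupportedMod ℓ k (mrColumn ℓ g f k) := by
  have hprod : ∀ m ≤ ℓ, IsSupportedMod ℓ m (∏ i ∈ range m, f i) := fun m hm => by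
    simpa using IsSupportedMod.prod (t := range m) fun i hi => hf i (by simp at hi; omega)
  have := (hg.mul (hprod _ (k.mod_lt hℓ).le)).mul ((hprod ℓ le_rfl).pow (k / ℓ))
  rw [mrColumn]
  convert this using 1
  rw [zero_add, nsmul_eq_mul, ZMod.natCast_self, mul_zero, add_zero, ZMod.natCast_mod]

variable {g : R} {f q : ℕ → R} {h : R}

lemma mrColumn_eq_of_eq_mul_root (hℓ : 0 < ℓ) (hq : ∀ i < ℓ, f i = q i * h)
    (hh : h ^ ℓ = ∏ i ∈ range ℓ, f i) (k : ℕ) :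
    mrColumn ℓ g f k = g * (∏ i ∈ range (k % ℓ), q i) * h ^ k := by
  have hprod : ∀ m ≤ ℓ, ∏ i ∈ range m, f i = (∏ i ∈ range m, q i) * h ^ m := fun m hm => by
    rw [prod_congr rfl fun i hi => hq i (by simp at hi; omega), prod_mul_distrib, prod_const,
      card_range]
  rw [mrColumn, hprod _ (k.mod_lt hℓ).le, ← hh, ← pow_mul, ← Nat.mod_add_div k ℓ, pow_add,
    Nat.mod_add_div]
  ring

lemma prod_eq_one_of_eq_mul_root [IsDomain R] (hq : ∀ i < ℓ, f i = q i * h)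
    (hh : h ^ ℓ = ∏ i ∈ range ℓ, f i) (h0 : h ≠ 0) : ∏ i ∈ range ℓ, q i = 1 := by
  rwa [prod_congr rfl fun i hi => hq i (mem_range.mp hi), prod_mul_distrib, prod_const,
    card_range, eq_comm, mul_eq_right₀ (pow_ne_zero ℓ h0)] at hh

lemma mrColumn_mul_map (φ : R →+* R) (G : R) (F : ℕ → R) (hq : ∏ i ∈ range ℓ, q i = 1)
    (k : ℕ) :
    mrColumn ℓ (g * φ G) (fun i => q i * φ (F i)) k
      = g * (∏ i ∈ range (k % ℓ), q i) * φ (mrColumn ℓ G F k) := by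
  simp only [mrColumn, prod_mul_distrib, hq, one_mul, map_mul, map_pow, map_prod]
  ring

end MultipleRiordan

section Product

variable {R : Type*} [CommRing R] {ℓ : ℕ}

lemma mrEntry_eq_coeff_mrColumn (g : R⟦X⟧) (f : ℕ → R⟦X⟧) (n k : ℕ) :
    mrEntry ℓ g f n k = coeff n (mrColumn ℓ g f k) := rfl

lemma sum_mrEntry_mul_mrEntry (hℓ : 0 < ℓ) {g G h : R⟦X⟧} {f F q : ℕ → R⟦X⟧}
    (hG : IsSupportedMod ℓ 0 G) (hF : ∀ i < ℓ, IsSupportedMod ℓ 1 (F i))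
    (hh0 : constantCoeff h = 0) (hh : h ^ ℓ = ∏ i ∈ range ℓ, f i)
    (hq : ∀ i < ℓ, f i = q i * h) (hq1 : ∏ i ∈ range ℓ, q i = 1) (n k : ℕ) :
    ∑ j ∈ range (n + 1), mrEntry ℓ g f n j * mrEntry ℓ G F j k
      = mrEntry ℓ (g * psComp G h) (fun i => q i * psComp (F i) h) n k := by
  let φ : R⟦X⟧ →+* R⟦X⟧ :=
    (substAlgHom (R := R) (HasSubst.of_constantCoeff_zero' hh0)).toRingHom
  have hφ : ∀ A, psComp A h = φ A := fun A => by
    rw [psComp_eq_subst hh0, ← coe_substAlgHom (HasSubst.of_constantCoeff_zero' hh0)]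
    rfl
  simp only [mrEntry_eq_coeff_mrColumn, hφ, mrColumn_mul_map φ G F hq1]
  rw [← hφ, coeff_mul_psComp hh0]
  refine sum_congr rfl fun j _ => ?_
  rw [mrColumn_eq_of_eq_mul_root hℓ hq hh, mul_comm]
  by_cases hj : coeff j (mrColumn ℓ G F k) = 0
  · rw [hj, zero_mul, zero_mul]
  · have hjk : (j : ZMod ℓ) = k :=
      by_contra fun hjk => hj (isSupportedMod_mrColumn hℓ hG hF k j hjk)
    rw [(ZMod.natCast_eq_natCast_iff' _ _ _).mp hjk]

end Product

theorem stmt1_general {K : Type*} [Field K] (ℓ : ℕ) (hℓ : 2 ≤ ℓ)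
    (g G : K⟦X⟧) (f F : ℕ → K⟦X⟧)
    (hg : ∀ n, ¬ (ℓ ∣ n) → coeff n g = 0) (hg0 : constantCoeff g ≠ 0)
    (hf : ∀ i < ℓ, ∀ n, n % ℓ ≠ 1 → coeff n (f i) = 0)
    (hf1 : ∀ i < ℓ, coeff 1 (f i) ≠ 0)
    (hG : ∀ n, ¬ (ℓ ∣ n) → coeff n G = 0) (hG0 : constantCoeff G ≠ 0)
    (hF : ∀ i < ℓ, ∀ n, n % ℓ ≠ 1 → coeff n (F i) = 0)
    (hF1 : ∀ i < ℓ, coeff 1 (F i) ≠ 0)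
    (h : K⟦X⟧) (hhs : ∀ n, n % ℓ ≠ 1 → coeff n h = 0) (hh1 : coeff 1 h ≠ 0)
    (hhl : h ^ ℓ = ∏ i ∈ Finset.range ℓ, f i)
    (q : ℕ → K⟦X⟧) (hq : ∀ i < ℓ, f i = q i * h)
    (d e : ℕ → ℕ → K)
    (hd : ∀ n k, d n k = mrEntry ℓ g f n k)
    (he : ∀ n k, e n k = mrEntry ℓ G F n k) :
    (∀ n, ¬ (ℓ ∣ n) → coeff n (g * psComp G h) = 0) ∧
    constantCoeff (g * psComp G h) ≠ 0 ∧
    (∀ i < ℓ, ∀ n, n % ℓ ≠ 1 → coeff n (q i * psComp (F i) h) = 0) ∧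
    (∀ i < ℓ, coeff 1 (q i * psComp (F i) h) ≠ 0) ∧
    (∀ n k, ∑ j ∈ Finset.range (n + 1), d n j * e j k
      = mrEntry ℓ (g * psComp G h) (fun i => q i * psComp (F i) h) n k) := by
  have hℓ1 : ℓ ≠ 1 := by omega
  have hG' := isSupportedMod_zero_iff.mpr hG
  have hF' i hi := (isSupportedMod_one_iff hℓ1).mpr (hF i hi)
  have hh := (isSupportedMod_one_iff hℓ1).mpr hhs
  have hh0 : constantCoeff h = 0 := by simpa using hhs 0 (by simp)
  have hh_ne : h ≠ 0 := by rintro rfl; simp at hh1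
  have hq' (i) (hi : i < ℓ) : IsSupportedMod ℓ 0 (q i) := by
    refine IsSupportedMod.of_mul_right (s := 1) ?_ hh hh_ne
    rw [zero_add, ← hq i hi]
    exact (isSupportedMod_one_iff hℓ1).mpr (hf i hi)
  refine ⟨?_, ?_, fun i hi => ?_, fun i hi => ?_, fun n k => ?_⟩
  · simpa [isSupportedMod_zero_iff] using (isSupportedMod_zero_iff.mpr hg).mul (hG'.psComp hh)
  · rw [map_mul, constantCoeff_psComp]
    exact mul_ne_zero hg0 hG0
  · simpa [isSupportedMod_one_iff hℓ1] using (hq' i hi).mul ((hF' i hi).psComp hh)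
  · have hq0 : constantCoeff (q i) ≠ 0 := fun h0 =>
      hf1 i hi (by simp [hq i hi, coeff_one_mul, h0, hh0])
    have hF0 : constantCoeff (F i) = 0 := by simpa using hF i hi 0 (by simp)
    rw [coeff_one_mul, coeff_one_psComp, constantCoeff_psComp, hF0, mul_zero, zero_add]
    exact mul_ne_zero (mul_ne_zero (hF1 i hi) hh1) hq0
  · simp only [hd, he]
    exact sum_mrEntry_mul_mrEntry (by omega) hG' hF' hh0 hhl hq
      (prod_eq_one_of_eq_mul_root hq hhl hh_ne) n k

/-- The product of two multiple Riordan arrays is a multiple Riordan array. -/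
theorem stmt1 {K : Type*} [Field K] [CharZero K] (ℓ : ℕ) (hℓ : 2 ≤ ℓ)
    (g G : K⟦X⟧) (f F : ℕ → K⟦X⟧)
    (hg : ∀ n, ¬ (ℓ ∣ n) → coeff n g = 0) (hg0 : constantCoeff g ≠ 0)
    (hf : ∀ i < ℓ, ∀ n, n % ℓ ≠ 1 → coeff n (f i) = 0)
    (hf1 : ∀ i < ℓ, coeff 1 (f i) ≠ 0)
    (hG : ∀ n, ¬ (ℓ ∣ n) → coeff n G = 0) (hG0 : constantCoeff G ≠ 0)
    (hF : ∀ i < ℓ, ∀ n, n % ℓ ≠ 1 → coeff n (F i) = 0)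
    (hF1 : ∀ i < ℓ, coeff 1 (F i) ≠ 0)
    (h : K⟦X⟧) (hhs : ∀ n, n % ℓ ≠ 1 → coeff n h = 0) (hh1 : coeff 1 h ≠ 0)
    (hhl : h ^ ℓ = ∏ i ∈ Finset.range ℓ, f i)
    (q : ℕ → K⟦X⟧) (hq : ∀ i < ℓ, f i = q i * h)
    (d e : ℕ → ℕ → K)
    (hd : ∀ n k, d n k = mrEntry ℓ g f n k)
    (he : ∀ n k, e n k = mrEntry ℓ G F n k) :
    (∀ n, ¬ (ℓ ∣ n) → coeff n (g * psComp G h) = 0) ∧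
    constantCoeff (g * psComp G h) ≠ 0 ∧
    (∀ i < ℓ, ∀ n, n % ℓ ≠ 1 → coeff n (q i * psComp (F i) h) = 0) ∧
    (∀ i < ℓ, coeff 1 (q i * psComp (F i) h) ≠ 0) ∧
    (∀ n k, ∑ j ∈ Finset.range (n + 1), d n j * e j k
      = mrEntry ℓ (g * psComp G h) (fun i => q i * psComp (F i) h) n k) :=
  stmt1_general ℓ hℓ g G f F hg hg0 hf hf1 hG hG0 hF hF1 h hhs hh1 hhl q hq d e hd he
end

section
/- For every m, n ∈ ℕ and every element x of a commutative ring R: Σ_{k=0}^{n} C(n,k)·k^m·(−1)^{n−k}·x^{n−k} = Σ_{k=0}^{min(m,n)} S(m,k)·C(n,k)·k!·(1−x)^{n−k}. -/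
/-!
Expand `k ^ m = ∑ⱼ S(m, j) · k(k-1)⋯(k-j+1)` in falling factorials. Since
`C(n, k) · k(k-1)⋯(k-j+1) = n(n-1)⋯(n-j+1) · C(n-j, k-j)`, the binomial theorem collapses each
inner sum over `k` to `n(n-1)⋯(n-j+1) · (1 - x) ^ (n - j)`, and `n(n-1)⋯(n-j+1) = C(n, j) · j!`.
-/

def stirling2 : ℕ → ℕ → ℕ
  | 0, 0 => 1
  | 0, _ + 1 => 0
  | _ + 1, 0 => 0
  | m + 1, k + 1 => (k + 1) * stirling2 m (k + 1) + stirling2 m k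

open Finset Nat

theorem stirling2_eq_stirlingSecond : stirling2 = stirlingSecond := by
  funext m k
  induction m generalizing k with
  | zero => cases k <;> rfl
  | succ m ih => cases k <;> simp [stirling2, stirlingSecond, ih]

theorem Nat.mul_descFactorial (k j : ℕ) :
    k * k.descFactorial j = j * k.descFactorial j + k.descFactorial (j + 1) := by
  rcases le_or_gt j k with hjk | hkj
  · rw [descFactorial_succ, ← add_mul, Nat.add_sub_cancel' hjk]
  · simp [descFactorial_eq_zero_iff_lt.2 hkj]

theorem Nat.pow_eq_sum_stirlingSecond_mul_descFactorial (k m : ℕ) :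
    k ^ m = ∑ j ∈ range (m + 1), stirlingSecond m j * k.descFactorial j := by
  induction m with
  | zero => simp
  | succ m ih =>
    set g := fun j => j * stirlingSecond m j * k.descFactorial j
    have shift : ∑ j ∈ range (m + 1), (j + 1) * stirlingSecond m (j + 1) * k.descFactorial (j + 1)
        = ∑ j ∈ range (m + 1), g j :=
      calc _ = ∑ j ∈ range (m + 2), g j := by simp [g, sum_range_succ' g]
        _ = _ := by simp [g, sum_range_succ g, stirlingSecond_eq_zero_of_lt]
    calc k ^ (m + 1)
        = ∑ j ∈ range (m + 1), (g j + stirlingSecond m j * k.descFactorial (j + 1)) := by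
          rw [pow_succ', ih, mul_sum]
          refine sum_congr rfl fun j _ => ?_
          rw [mul_left_comm, mul_descFactorial]
          ring
      _ = ∑ j ∈ range (m + 1), stirlingSecond (m + 1) (j + 1) * k.descFactorial (j + 1) := by
          rw [sum_add_distrib, ← shift, ← sum_add_distrib]
          simp only [stirlingSecond_succ_succ, add_mul]
      _ = ∑ j ∈ range (m + 2), stirlingSecond (m + 1) j * k.descFactorial j := by
          simp [sum_range_succ' _ (m + 1)]

theorem Nat.choose_mul_descFactorial_add (j N i : ℕ) :
    (j + N).choose (j + i) * (j + i).descFactorial j = (j + N).descFactorial j * N.choose i := by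
  rw [descFactorial_eq_factorial_mul_choose, descFactorial_eq_factorial_mul_choose, mul_left_comm,
    choose_mul (by omega)]
  simp [mul_assoc]

theorem sum_choose_mul_descFactorial_mul_pow {R : Type*} [CommSemiring R] (n j : ℕ) (y : R) :
    ∑ k ∈ range (n + 1), ((n.choose k * k.descFactorial j : ℕ) : R) * y ^ (n - k)
      = n.descFactorial j * (1 + y) ^ (n - j) := by
  rcases le_or_gt j n with hjn | hnj
  · obtain ⟨N, rfl⟩ := Nat.exists_eq_add_of_le hjn
    rw [add_assoc, sum_range_add, sum_eq_zero fun k hk => by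
      simp [descFactorial_eq_zero_iff_lt.2 (mem_range.1 hk)], zero_add, add_tsub_cancel_left,
      add_pow, mul_sum]
    refine sum_congr rfl fun i _ => ?_
    rw [Nat.choose_mul_descFactorial_add, Nat.add_sub_add_left]
    push_cast
    ring
  · rw [descFactorial_eq_zero_iff_lt.2 hnj, sum_eq_zero fun k hk => by
      simp [descFactorial_eq_zero_iff_lt.2 ((mem_range.1 hk).trans_le hnj)]]
    simp

/-- An umbral identity:
`Σ_{k=0}^n C(n,k) k^m (−1)^{n−k} x^{n−k} = Σ_{k=0}^{m∧n} S(m,k) C(n,k) k! (1−x)^{n−k}`. -/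
theorem stmt15 {R : Type*} [CommRing R] (m n : ℕ) (x : R) :
    ∑ k ∈ Finset.range (n + 1),
        (Nat.choose n k * k ^ m : ℕ) * (-1 : R) ^ (n - k) * x ^ (n - k)
      = ∑ k ∈ Finset.range (min m n + 1),
          (stirling2 m k * Nat.choose n k * Nat.factorial k : ℕ) * (1 - x) ^ (n - k) := by
  have expand : ∀ k, ((n.choose k * k ^ m : ℕ) : R) * (-1) ^ (n - k) * x ^ (n - k)
      = ∑ j ∈ range (m + 1),
          (stirlingSecond m j : R) * (((n.choose k * k.descFactorial j : ℕ) : R) * (-x) ^ (n - k)) := by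
    intro k
    push_cast [neg_pow x, pow_eq_sum_stirlingSecond_mul_descFactorial, mul_sum, sum_mul]
    exact sum_congr rfl fun j _ => by ring
  have vanish : ∀ j ∈ range (m + 1), j ∉ range (min m n + 1) →
      (stirlingSecond m j * n.choose j * j ! : ℕ) * (1 - x) ^ (n - j) = (0 : R) := by
    intro j hjm hjmn
    rw [mem_range] at hjm hjmn
    simp [choose_eq_zero_of_lt (show n < j by omega)]
  simp only [expand, stirling2_eq_stirlingSecond]
  rw [sum_comm, sum_subset (range_subset_range.2 (by omega)) vanish]
  refine sum_congr rfl fun j _ => ?_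
  rw [← mul_sum, sum_choose_mul_descFactorial_mul_pow, descFactorial_eq_factorial_mul_choose,
    ← sub_eq_add_neg]
  push_cast
  ring
end

section
/- Let K be a field of characteristic 0, let g, f ∈ K[[t]] with g(0) ≠ 0, f(0) = 0 and [t]f ≠ 0, and define r_{n,k} = [t^n] g f^k and r♯_{n,k} = [t^n] g (f+1)^k for all n, k ≥ 0. Then for every m, n, s ∈ ℕ: Σ_{k=0}^{n} C(n,k)·r_{s,n−k}·k^m = Σ_{k=0}^{min(m,n)} S(m,k)·C(n,k)·k!·r♯_{s,n−k}. -/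
open PowerSeries

theorem stirling2_eq_stirlingSecond_s16 : ∀ m k, stirling2 m k = Nat.stirlingSecond m k
  | 0, 0 | 0, _ + 1 | _ + 1, 0 => rfl
  | m + 1, k + 1 => by
    rw [stirling2, Nat.stirlingSecond_succ_succ, stirling2_eq_stirlingSecond_s16 m k,
      stirling2_eq_stirlingSecond_s16 m (k + 1)]

open Finset

namespace Nat

theorem mul_descFactorial_eq (x j : ℕ) :
    x * x.descFactorial j = x.descFactorial (j + 1) + j * x.descFactorial j := by
  rw [descFactorial_succ, ← Nat.add_mul]
  rcases le_or_gt j x with hjx | hxj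
  · rw [Nat.sub_add_cancel hjx]
  · simp [descFactorial_of_lt hxj]

theorem pow_eq_sum_stirlingSecond_mul_descFactorial_s16 (x : ℕ) : ∀ m : ℕ,
    x ^ m = ∑ j ∈ range (m + 1), stirlingSecond m j * x.descFactorial j
  | 0 => by simp
  | m + 1 => by
    have shift : ∑ j ∈ range (m + 1), (j + 1) * stirlingSecond m (j + 1) * x.descFactorial (j + 1)
        = ∑ j ∈ range (m + 1), j * stirlingSecond m j * x.descFactorial j := by
      have h := sum_range_succ' (fun j => j * stirlingSecond m j * x.descFactorial j) (m + 1)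
      rw [sum_range_succ, stirlingSecond_eq_zero_of_lt (lt_add_one m)] at h
      simpa using h.symm
    calc x ^ (m + 1)
        = ∑ j ∈ range (m + 1), stirlingSecond m j * (x * x.descFactorial j) := by
          rw [pow_succ, pow_eq_sum_stirlingSecond_mul_descFactorial_s16 x m, sum_mul]
          exact sum_congr rfl fun j _ => by ring
      _ = ∑ j ∈ range (m + 1), j * stirlingSecond m j * x.descFactorial j
            + ∑ j ∈ range (m + 1), stirlingSecond m j * x.descFactorial (j + 1) := by
          rw [← sum_add_distrib]
          exact sum_congr rfl fun j _ => by rw [mul_descFactorial_eq]; ring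
      _ = ∑ j ∈ range (m + 1), ((j + 1) * stirlingSecond m (j + 1) + stirlingSecond m j)
            * x.descFactorial (j + 1) := by
          rw [← shift, ← sum_add_distrib]
          exact sum_congr rfl fun j _ => by ring
      _ = _ := by
          rw [sum_range_succ' _ (m + 1)]
          simp [stirlingSecond_succ_succ]

theorem choose_mul_descFactorial_sub (n i j : ℕ) :
    n.choose i * (n - i).descFactorial j = n.descFactorial j * (n - j).choose i := by
  have hi := choose_mul (n := n) (Nat.le_add_right i j)
  have hj := choose_mul (n := n) (Nat.le_add_left j i)
  rw [Nat.add_sub_cancel_left, choose_symm_add] at hi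
  rw [Nat.add_sub_cancel, hi] at hj
  rw [descFactorial_eq_factorial_mul_choose, descFactorial_eq_factorial_mul_choose]
  linear_combination (j ! : ℕ) * hj

end Nat

section BinomialTransform

variable {R : Type*} [CommSemiring R]

theorem sum_choose_mul_descFactorial_sub_mul (a : ℕ → R) (n j : ℕ) :
    ∑ i ∈ range (n + 1), ((n.choose i * (n - i).descFactorial j : ℕ) : R) * a i
      = n.descFactorial j * ∑ i ∈ range (n - j + 1), ((n - j).choose i : R) * a i := by
  have extend : ∑ i ∈ range (n - j + 1), ((n - j).choose i : R) * a i
      = ∑ i ∈ range (n + 1), ((n - j).choose i : R) * a i := by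
    refine sum_subset (range_subset_range.2 (by omega)) fun i _ hi => ?_
    rw [mem_range, not_lt] at hi
    simp [Nat.choose_eq_zero_of_lt (n := n - j) (k := i) (by omega)]
  rw [extend, mul_sum]
  refine sum_congr rfl fun i _ => ?_
  rw [Nat.choose_mul_descFactorial_sub]
  push_cast
  ring

theorem sum_choose_mul_pow_eq_sum_stirlingSecond (a : ℕ → R) (m n : ℕ) :
    ∑ k ∈ range (n + 1), (n.choose k : R) * a (n - k) * (k ^ m : ℕ)
      = ∑ k ∈ range (min m n + 1), (Nat.stirlingSecond m k * n.choose k * k.factorial : ℕ)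
          * ∑ i ∈ range (n - k + 1), ((n - k).choose i : R) * a i := by
  have truncate : ∑ k ∈ range (min m n + 1),
        (Nat.stirlingSecond m k * n.choose k * k.factorial : ℕ)
          * ∑ i ∈ range (n - k + 1), ((n - k).choose i : R) * a i
      = ∑ k ∈ range (m + 1), (Nat.stirlingSecond m k * n.choose k * k.factorial : ℕ)
          * ∑ i ∈ range (n - k + 1), ((n - k).choose i : R) * a i := by
    refine sum_subset (range_subset_range.2 (by omega)) fun k hkm hkn => ?_
    simp only [mem_range, not_lt] at hkm hkn
    simp [Nat.choose_eq_zero_of_lt (n := n) (k := k) (by omega)]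
  calc ∑ k ∈ range (n + 1), (n.choose k : R) * a (n - k) * (k ^ m : ℕ)
      = ∑ i ∈ range (n + 1), (n.choose i : R) * a i * ((n - i) ^ m : ℕ) := by
        rw [← sum_range_reflect]
        refine sum_congr rfl fun i hi => ?_
        rw [mem_range] at hi
        rw [Nat.add_sub_cancel, Nat.choose_symm (by omega), Nat.sub_sub_self (by omega)]
    _ = ∑ k ∈ range (m + 1), (Nat.stirlingSecond m k : R)
          * ∑ i ∈ range (n + 1), ((n.choose i * (n - i).descFactorial k : ℕ) : R) * a i := by
        simp only [Nat.pow_eq_sum_stirlingSecond_mul_descFactorial_s16 _ m, Nat.cast_sum, mul_sum]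
        rw [sum_comm]
        refine sum_congr rfl fun k _ => sum_congr rfl fun i _ => ?_
        push_cast
        ring
    _ = _ := by
        rw [truncate]
        refine sum_congr rfl fun k _ => ?_
        rw [sum_choose_mul_descFactorial_sub_mul, Nat.descFactorial_eq_factorial_mul_choose]
        push_cast
        ring

end BinomialTransform

theorem PowerSeries.coeff_mul_add_one_pow {R : Type*} [CommSemiring R] (g f : R⟦X⟧) (s N : ℕ) :
    coeff s (g * (f + 1) ^ N) = ∑ i ∈ range (N + 1), (N.choose i : R) * coeff s (g * f ^ i) := by
  simp only [add_pow, one_pow, mul_one, mul_sum, map_sum]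
  refine sum_congr rfl fun i _ => ?_
  rw [← map_natCast (C (R := R)), ← mul_assoc, coeff_mul_C, mul_comm]

theorem stmt16_general {K : Type*} [Field K]
    (g f : K⟦X⟧)
    (r rs : ℕ → ℕ → K)
    (hr : ∀ n k, r n k = coeff n (g * f ^ k))
    (hrs : ∀ n k, rs n k = coeff n (g * (f + 1) ^ k)) :
    ∀ m n s : ℕ,
      ∑ k ∈ Finset.range (n + 1), (Nat.choose n k : K) * r s (n - k) * (k ^ m : ℕ)
        = ∑ k ∈ Finset.range (min m n + 1),
            (stirling2 m k * Nat.choose n k * Nat.factorial k : ℕ) * rs s (n - k) := by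
  intro m n s
  have binomial_transform : ∀ N, rs s N = ∑ i ∈ range (N + 1), (N.choose i : K) * r s i := by
    intro N
    simp only [hrs, hr, coeff_mul_add_one_pow]
  simp only [binomial_transform, stirling2_eq_stirlingSecond_s16]
  exact sum_choose_mul_pow_eq_sum_stirlingSecond (r s) m n

/-- Umbral identity relating a Riordan matrix `(g, f)` and the associated Riordan type
matrix `(g, f + 1)`. -/
theorem stmt16 {K : Type*} [Field K] [CharZero K]
    (g f : K⟦X⟧) (hg0 : constantCoeff g ≠ 0)
    (hf0 : constantCoeff f = 0) (hf1 : coeff 1 f ≠ 0)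
    (r rs : ℕ → ℕ → K)
    (hr : ∀ n k, r n k = coeff n (g * f ^ k))
    (hrs : ∀ n k, rs n k = coeff n (g * (f + 1) ^ k)) :
    ∀ m n s : ℕ,
      ∑ k ∈ Finset.range (n + 1), (Nat.choose n k : K) * r s (n - k) * (k ^ m : ℕ)
        = ∑ k ∈ Finset.range (min m n + 1),
            (stirling2 m k * Nat.choose n k * Nat.factorial k : ℕ) * rs s (n - k) :=
  stmt16_general g f r rs hr hrs
end
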